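/- For a double cone O = (a + V₊) ∩ (b − V₊) with b − a ∈ V₊, the difference set O − O equals the double cone ((a − b) + V₊) ∩ ((b − a) − V₊). -/
import Mathlib

open Pointwise

/-- The open forward light cone `V₊ = {x : x₀ > 0, x₀² > x₁² + ⋯ + x_s²}`. -/
def Vplus (s : ℕ) : Set (Fin (s + 1) → ℝ) :=
  {x | 0 < x 0 ∧ ∑ i ∈ Finset.univ.erase 0, (x i) ^ 2 < (x 0) ^ 2}

/-- The double cone `O = (a + V₊) ∩ (b - V₊)`. -/
def DoubleCone (s : ℕ) (a b : Fin (s + 1) → ℝ) : Set (Fin (s + 1) → ℝ) :=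
  {x | x - a ∈ Vplus s ∧ b - x ∈ Vplus s}

lemma Vplus_add {s : ℕ} {x y : Fin (s + 1) → ℝ} (hx : x ∈ Vplus s) (hy : y ∈ Vplus s) :
    x + y ∈ Vplus s := by
  obtain ⟨hx0, hx1⟩ := hx
  obtain ⟨hy0, hy1⟩ := hy
  refine ⟨by simpa using add_pos hx0 hy0, ?_⟩
  have hcs := Finset.sum_mul_sq_le_sq_mul_sq (Finset.univ.erase 0) x y
  have hA0 : 0 ≤ ∑ i ∈ Finset.univ.erase 0, (x i) ^ 2 :=
    Finset.sum_nonneg fun i _ => sq_nonneg _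
  have hB0 : 0 ≤ ∑ i ∈ Finset.univ.erase 0, (y i) ^ 2 :=
    Finset.sum_nonneg fun i _ => sq_nonneg _
  have hprod : (∑ i ∈ Finset.univ.erase 0, (x i) ^ 2) * ∑ i ∈ Finset.univ.erase 0, (y i) ^ 2
      < x 0 ^ 2 * y 0 ^ 2 := by nlinarith [sq_nonneg (x 0), sq_nonneg (y 0)]
  have hxy : ∑ i ∈ Finset.univ.erase 0, x i * y i < x 0 * y 0 := by
    nlinarith [mul_pos hx0 hy0]
  have hexp : ∑ i ∈ Finset.univ.erase 0, ((x + y) i) ^ 2 =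
      (∑ i ∈ Finset.univ.erase 0, (x i) ^ 2) + (∑ i ∈ Finset.univ.erase 0, (y i) ^ 2)
        + 2 * ∑ i ∈ Finset.univ.erase 0, x i * y i := by
    rw [← Finset.sum_add_distrib, Finset.mul_sum, ← Finset.sum_add_distrib]
    exact Finset.sum_congr rfl fun i _ => by simp [Pi.add_apply]; ring
  have : (x + y) 0 = x 0 + y 0 := rfl
  rw [hexp, this]
  nlinarith

lemma Vplus_half {s : ℕ} {x : Fin (s + 1) → ℝ} (hx : x ∈ Vplus s) :
    (fun i => x i / 2) ∈ Vplus s := by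
  obtain ⟨hx0, hx1⟩ := hx
  refine ⟨by positivity, ?_⟩
  have : ∑ i ∈ Finset.univ.erase 0, (x i / 2) ^ 2
      = (∑ i ∈ Finset.univ.erase 0, (x i) ^ 2) / 4 := by
    rw [Finset.sum_div]; exact Finset.sum_congr rfl fun i _ => by ring
  rw [this]
  nlinarith

/-- The difference set `O - O` of a double cone `O = (a + V₊) ∩ (b - V₊)` with
`b - a ∈ V₊` equals the double cone `((a - b) + V₊) ∩ ((b - a) - V₊)`. -/
theorem doubleCone_sub_self (s : ℕ) (a b : Fin (s + 1) → ℝ) (h : b - a ∈ Vplus s) :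
    DoubleCone s a b - DoubleCone s a b = DoubleCone s (a - b) (b - a) := by
  ext z
  constructor
  · rintro ⟨x, hx, y, hy, rfl⟩
    obtain ⟨hxa, hbx⟩ := hx
    obtain ⟨hya, hby⟩ := hy
    constructor
    · have := Vplus_add hxa hby
      convert this using 1
      funext i; simp [Pi.sub_apply, Pi.add_apply]; try ring
    · have := Vplus_add hbx hya
      convert this using 1
      funext i; simp [Pi.sub_apply, Pi.add_apply]; try ring
  · rintro ⟨h1, h2⟩
    refine ⟨a + fun i => (z i + (b i - a i)) / 2, ⟨?_, ?_⟩,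
            a + fun i => ((b i - a i) - z i) / 2, ⟨?_, ?_⟩, ?_⟩
    · have := Vplus_half h1
      convert this using 1
      funext i; simp [Pi.sub_apply, Pi.add_apply]; try ring
    · have := Vplus_half h2
      convert this using 1
      funext i; simp [Pi.sub_apply, Pi.add_apply]; try ring
    · have := Vplus_half h2
      convert this using 1
      funext i; simp [Pi.sub_apply, Pi.add_apply]; try ring
    · have := Vplus_half h1
      convert this using 1
      funext i; simp [Pi.sub_apply, Pi.add_apply]; try ring
    · funext i; simp [Pi.sub_apply, Pi.add_apply]; try ring
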